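/- arXiv:1411.0505 — 3 statements merged into one kernel-verified Lean document; each statement's English description precedes it below -/
import Mathlib

section
/- Either the set D of primitive Matchings generated by D₁ and D₂ is finite, in which case K₁+K₂ is a self-similar set satisfying K₁+K₂ = ⋃_{w∈D} φ_w(K₁+K₂); or D is infinite, in which case K₁+K₂ = closure( ⋃_{w∈D} φ_w(K₁+K₂) ), i.e. K₁+K₂ is the unique attractor of the infinite iterated function system {φ_w : w ∈ D}. -/
open Finset Pointwise

/-- The block `(0,…,0, β^k * a)` of length `k` associated to the similitude
`x ↦ x/β^k + a`. -/
noncomputable def digitBlock (β : ℝ) (k : ℕ) (a : ℝ) : List ℝ :=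
  List.replicate (k - 1) 0 ++ [β ^ k * a]

/-- `w` is a Matching generated by the digital sets `P` and `Q`: it is the coordinatewise
sum of a concatenation of blocks from `P` and a concatenation of blocks from `Q`
having the same total length as `w`. -/
def IsMatching {n m : ℕ} (P : Fin n → List ℝ) (Q : Fin m → List ℝ) (w : List ℝ) : Prop :=
  ∃ (is : List (Fin n)) (js : List (Fin m)),
    is ≠ [] ∧ js ≠ [] ∧
    (is.map P).flatten.length = w.length ∧
    (js.map Q).flatten.length = w.length ∧
    w = List.zipWith (· + ·) (is.map P).flatten (js.map Q).flatten

/-- A Matching is primitive if it is not a concatenation of two or more shorter Matchings. -/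
def IsPrimMatching {n m : ℕ} (P : Fin n → List ℝ) (Q : Fin m → List ℝ) (w : List ℝ) : Prop :=
  IsMatching P Q w ∧
    ¬ ∃ u v : List ℝ, u ≠ [] ∧ v ≠ [] ∧ IsMatching P Q u ∧ IsMatching P Q v ∧ w = u ++ v

/-- The value `Σ_{i=1}^{L} c_i β^{-i}` of the block `w = (c_1,…,c_L)` in base `β`. -/
noncomputable def blockVal (β : ℝ) (w : List ℝ) : ℝ :=
  ∑ i : Fin w.length, w.get i / β ^ (i.1 + 1)

/-- The similitude `φ_w(x) = x/β^{|w|} + Σ_i c_i β^{-i}` associated to a block `w`. -/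
noncomputable def phiBlock (β : ℝ) (w : List ℝ) (x : ℝ) : ℝ :=
  x / β ^ w.length + blockVal β w

/-- `x : ℕ → ℝ` (indexed from 0, representing `(x_k)_{k ≥ 1}`) is the infinite
concatenation of the nonempty blocks `W 0, W 1, …`. -/
def IsConcatSeq (W : ℕ → List ℝ) (x : ℕ → ℝ) : Prop :=
  (∀ t, W t ≠ []) ∧
    ∀ (t : ℕ) (i : Fin (W t).length),
      x ((∑ s ∈ Finset.range t, (W s).length) + i) = (W t).get i

/-- `x` is an infinite concatenation of blocks from the family `Ws`. -/
def IsInfConcatFrom (Ws : Set (List ℝ)) (x : ℕ → ℝ) : Prop :=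
  ∃ W : ℕ → List ℝ, (∀ t, W t ∈ Ws) ∧ IsConcatSeq W x

/-- The value `Σ_{k=1}^{∞} x_k β^{-k}` of a sequence (indexed from 0). -/
noncomputable def seqVal (β : ℝ) (x : ℕ → ℝ) : ℝ :=
  ∑' k : ℕ, x k / β ^ (k + 1)

/-- The set `E` of values of infinite concatenations of Matchings. -/
def Eset {n m : ℕ} (β : ℝ) (P : Fin n → List ℝ) (Q : Fin m → List ℝ) : Set ℝ :=
  {z | ∃ x : ℕ → ℝ, IsInfConcatFrom {w | IsMatching P Q w} x ∧ z = seqVal β x}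

/-- `a` is a coding: the coordinatewise sum of an infinite concatenation of blocks from
`P` and an infinite concatenation of blocks from `Q`. -/
def IsCoding {n m : ℕ} (P : Fin n → List ℝ) (Q : Fin m → List ℝ) (a : ℕ → ℝ) : Prop :=
  ∃ x y : ℕ → ℝ, IsInfConcatFrom (Set.range P) x ∧ IsInfConcatFrom (Set.range Q) y ∧
    ∀ k, a k = x k + y k

/-- The set `C` of codings having a tail containing no segment that is a Matching. -/
def Cset {n m : ℕ} (P : Fin n → List ℝ) (Q : Fin m → List ℝ) : Set (ℕ → ℝ) :=
  {a | IsCoding P Q a ∧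
    ∃ N : ℕ, ∀ j ≥ N, ∀ l : ℕ, 1 ≤ l →
      ¬ IsMatching P Q (List.ofFn fun i : Fin l => a (j + i))}

/-!
Write `S = K₁ + K₂`. Every Matching `w` is the coordinatewise sum of a `P`-word `u` and a `Q`-word `v`
of the same length, so `φ_w (x + y) = φ_u x + φ_v y` and `φ_w` maps `S` into itself; hence so
does the union over primitive Matchings, whose closure therefore lies in the compact set `S`.
Conversely, given `x + y ∈ S`, code `x` and `y` by words of length at least `L`, and pad the two
words by repeating them to a common length. The padded pair is a Matching `w` with a point of
`φ_w(S)` within `(diam K₁ + diam K₂)/β^L` of `x + y`, and splitting off the first primitive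
Matching of `w` puts that point in `⋃_{w ∈ D} φ_w(S)`. If `D` is finite this union is compact,
hence equal to its closure.
-/

open Set

section Blocks

variable {β : ℝ}

lemma blockVal_nil : blockVal β [] = 0 := by
  simp [blockVal]

lemma blockVal_cons (c : ℝ) (w : List ℝ) :
    blockVal β (c :: w) = c / β + blockVal β w / β := by
  unfold blockVal
  change (∑ i : Fin (w.length + 1), (c :: w).get i / β ^ (i.1 + 1)) = _
  rw [Fin.sum_univ_succ, Finset.sum_div]
  simp [pow_succ, div_div, mul_comm]

lemma blockVal_append (u v : List ℝ) :
    blockVal β (u ++ v) = blockVal β u + blockVal β v / β ^ u.length := by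
  induction u with
  | nil => simp [blockVal_nil]
  | cons c u ih =>
      rw [List.cons_append, blockVal_cons, blockVal_cons, ih, List.length_cons, pow_succ]
      ring

lemma blockVal_zipWith_add {u v : List ℝ} (h : u.length = v.length) :
    blockVal β (List.zipWith (· + ·) u v) = blockVal β u + blockVal β v := by
  induction u generalizing v with
  | nil =>
      obtain rfl := List.length_eq_zero_iff.mp h.symm
      simp [blockVal_nil]
  | cons c u ih =>
      obtain _ | ⟨d, v⟩ := v
      · simp at h
      · simp only [List.zipWith_cons_cons, blockVal_cons, ih (Nat.succ_injective h)]
        ring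

lemma length_digitBlock {k : ℕ} (hk : 0 < k) (a : ℝ) : (digitBlock β k a).length = k := by
  simp [digitBlock]
  omega

lemma blockVal_digitBlock (hβ : β ≠ 0) {k : ℕ} (hk : 0 < k) (a : ℝ) :
    blockVal β (digitBlock β k a) = a := by
  have hzero : ∀ j, blockVal β (List.replicate j 0) = 0 := fun j => by
    induction j with
    | zero => simp [blockVal_nil]
    | succ j ih => rw [List.replicate_succ, blockVal_cons, ih]; simp
  rw [digitBlock, blockVal_append, hzero, blockVal_cons, List.length_replicate, blockVal_nil,
    zero_div, add_zero, zero_add, div_div, ← pow_succ', Nat.sub_add_cancel hk]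
  field_simp

lemma phiBlock_nil (x : ℝ) : phiBlock β [] x = x := by
  simp [phiBlock, blockVal_nil]

lemma phiBlock_append (u v : List ℝ) (x : ℝ) :
    phiBlock β (u ++ v) x = phiBlock β u (phiBlock β v x) := by
  simp only [phiBlock, List.length_append, blockVal_append, pow_add, add_div, div_div]
  ring

lemma phiBlock_zipWith_add {u v : List ℝ} (h : u.length = v.length) (x y : ℝ) :
    phiBlock β (List.zipWith (· + ·) u v) (x + y) = phiBlock β u x + phiBlock β v y := by
  simp only [phiBlock, List.length_zipWith, h, min_self, blockVal_zipWith_add h, add_div]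
  ring

lemma phiBlock_digitBlock (hβ : β ≠ 0) {k : ℕ} (hk : 0 < k) (a : ℝ) :
    phiBlock β (digitBlock β k a) = fun x => x / β ^ k + a := by
  ext x
  rw [phiBlock, length_digitBlock hk, blockVal_digitBlock hβ hk]

lemma dist_phiBlock (hβ : 0 < β) (w : List ℝ) (x y : ℝ) :
    dist (phiBlock β w x) (phiBlock β w y) = dist x y / β ^ w.length := by
  rw [Real.dist_eq, Real.dist_eq, phiBlock, phiBlock, add_sub_add_right_eq_sub, ← sub_div,
    abs_div, abs_of_pos (pow_pos hβ _)]

lemma continuous_phiBlock (w : List ℝ) : Continuous (phiBlock β w) :=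
  (continuous_id.div_const _).add continuous_const

lemma dist_le_of_mem_image_phiBlock (hβ : 0 < β) {K : Set ℝ} (hK : Bornology.IsBounded K)
    {w : List ℝ} {x y : ℝ} (hx : x ∈ phiBlock β w '' K) (hy : y ∈ phiBlock β w '' K) :
    dist x y ≤ Metric.diam K / β ^ w.length := by
  obtain ⟨s, hs, rfl⟩ := hx
  obtain ⟨t, ht, rfl⟩ := hy
  rw [dist_phiBlock hβ]
  gcongr
  exact Metric.dist_le_diam_of_mem hK hs ht

end Blocks

lemma length_flatten_map_replicate_flatten {ι α : Type*} (P : ι → List α) (is : List ι)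
    (c : ℕ) :
    (((List.replicate c is).flatten.map P).flatten).length = c * (is.map P).flatten.length := by
  induction c with
  | zero => simp
  | succ c ih =>
      rw [List.replicate_succ, List.flatten_cons, List.map_append, List.flatten_append,
        List.length_append, ih]
      ring

lemma exists_length_flatten_append_eq {ι κ α : Type*} (P : ι → List α) (Q : κ → List α)
    (is : List ι) (js : List κ) (hU : 0 < (is.map P).flatten.length)
    (hV : 0 < (js.map Q).flatten.length) :
    ∃ is₂ js₂, ((is ++ is₂).map P).flatten.length = ((js ++ js₂).map Q).flatten.length := by
  refine ⟨(List.replicate ((js.map Q).flatten.length - 1) is).flatten,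
    (List.replicate ((is.map P).flatten.length - 1) js).flatten, ?_⟩
  simp only [List.map_append, List.flatten_append, List.length_append,
    length_flatten_map_replicate_flatten]
  obtain ⟨k, hk⟩ := Nat.exists_eq_add_of_lt hU
  obtain ⟨l, hl⟩ := Nat.exists_eq_add_of_lt hV
  rw [hk, hl]
  simp only [zero_add, Nat.add_sub_cancel]
  ring

section Attractor

variable {β : ℝ} {n : ℕ} {P : Fin n → List ℝ} {K : Set ℝ}

lemma mapsTo_phiBlock_flatten (hK : K = ⋃ i, phiBlock β (P i) '' K) (is : List (Fin n)) :
    MapsTo (phiBlock β (is.map P).flatten) K K := by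
  induction is with
  | nil => exact fun x hx => by simpa [phiBlock_nil] using hx
  | cons i is ih =>
      intro x hx
      rw [List.map_cons, List.flatten_cons, phiBlock_append, hK]
      exact mem_iUnion_of_mem i (mem_image_of_mem _ (ih hx))

lemma exists_mem_image_phiBlock_flatten (hK : K = ⋃ i, phiBlock β (P i) '' K)
    (hP : ∀ i, P i ≠ []) {x : ℝ} (hx : x ∈ K) (L : ℕ) :
    ∃ is : List (Fin n), L < (is.map P).flatten.length ∧
      x ∈ phiBlock β (is.map P).flatten '' K := by
  induction L with
  | zero =>
      rw [hK] at hx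
      obtain ⟨i, hi⟩ := mem_iUnion.mp hx
      exact ⟨[i], by simpa [List.length_pos_iff] using hP i, by simpa using hi⟩
  | succ L ih =>
      obtain ⟨is, hlen, x', hx', rfl⟩ := ih
      rw [hK] at hx'
      obtain ⟨i, x'', hx'', rfl⟩ := mem_iUnion.mp hx'
      refine ⟨is ++ [i], ?_, x'', hx'', ?_⟩
      · have := List.length_pos_iff.mpr (hP i)
        simp only [List.map_append, List.flatten_append, List.length_append, List.map_cons, List.map_nil, List.flatten_cons, List.flatten_nil,
          List.append_nil]
        omega
      · simp [phiBlock_append]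

lemma dist_phiBlock_flatten_append_le (hβ : 0 < β) (hK : K = ⋃ i, phiBlock β (P i) '' K)
    (hb : Bornology.IsBounded K) {is : List (Fin n)} {x : ℝ}
    (hx : x ∈ phiBlock β (is.map P).flatten '' K) (is₂ : List (Fin n)) {x' : ℝ}
    (hx' : x' ∈ K) :
    dist x (phiBlock β ((is ++ is₂).map P).flatten x') ≤
      Metric.diam K / β ^ (is.map P).flatten.length := by
  rw [List.map_append, List.flatten_append, phiBlock_append]
  exact dist_le_of_mem_image_phiBlock hβ hb hx
    (mem_image_of_mem _ (mapsTo_phiBlock_flatten hK is₂ hx'))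

end Attractor

section Matching

variable {β : ℝ} {n m : ℕ} {P : Fin n → List ℝ} {Q : Fin m → List ℝ}

lemma isMatching_zipWith {is : List (Fin n)} {js : List (Fin m)} (his : is ≠ [])
    (hjs : js ≠ []) (h : (is.map P).flatten.length = (js.map Q).flatten.length) :
    IsMatching P Q (List.zipWith (· + ·) (is.map P).flatten (js.map Q).flatten) :=
  ⟨is, js, his, hjs, by simp [h], by simp [h], rfl⟩

lemma IsMatching.append {u v : List ℝ} (hu : IsMatching P Q u) (hv : IsMatching P Q v) :
    IsMatching P Q (u ++ v) := by
  obtain ⟨is, js, his, hjs, hl₁, hl₂, rfl⟩ := hu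
  obtain ⟨is', js', -, -, hl₁', hl₂', rfl⟩ := hv
  have h := hl₁.trans hl₂.symm
  have h' := hl₁'.trans hl₂'.symm
  rw [← List.zipWith_append h]
  simpa only [List.map_append, List.flatten_append] using
    isMatching_zipWith (List.append_ne_nil_of_left_ne_nil his is')
      (List.append_ne_nil_of_left_ne_nil hjs js')
      (by simp only [List.map_append, List.flatten_append, List.length_append, h, h'])

lemma IsMatching.exists_isPrimMatching_append {w : List ℝ} (hw : IsMatching P Q w) :
    ∃ w₁ rest, IsPrimMatching P Q w₁ ∧ (rest = [] ∨ IsMatching P Q rest) ∧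
      w = w₁ ++ rest := by
  induction h : w.length using Nat.strong_induction_on generalizing w with
  | _ L ih =>
    by_cases hprim : IsPrimMatching P Q w
    · exact ⟨w, [], hprim, Or.inl rfl, (List.append_nil w).symm⟩
    obtain ⟨u, v, -, hv, hu, hmv, rfl⟩ := not_not.mp (not_and.mp hprim hw)
    have hlt : u.length < L := by
      rw [← h, List.length_append]
      exact Nat.lt_add_of_pos_right (List.length_pos_iff.mpr hv)
    obtain ⟨w₁, r, hw₁, hr | hr, rfl⟩ := ih _ hlt hu rfl
    · exact ⟨w₁, v, hw₁, Or.inr hmv, by simp [hr]⟩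
    · exact ⟨w₁, r ++ v, hw₁, Or.inr (hr.append hmv), List.append_assoc _ _ _⟩

variable {K₁ K₂ : Set ℝ}

lemma IsMatching.mapsTo (hK₁ : K₁ = ⋃ i, phiBlock β (P i) '' K₁)
    (hK₂ : K₂ = ⋃ j, phiBlock β (Q j) '' K₂) {w : List ℝ} (hw : IsMatching P Q w) :
    MapsTo (phiBlock β w) (K₁ + K₂) (K₁ + K₂) := by
  obtain ⟨is, js, -, -, hl₁, hl₂, rfl⟩ := hw
  rintro _ ⟨x, hx, y, hy, rfl⟩
  rw [phiBlock_zipWith_add (hl₁.trans hl₂.symm)]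
  exact add_mem_add (mapsTo_phiBlock_flatten hK₁ is hx) (mapsTo_phiBlock_flatten hK₂ js hy)

lemma exists_isMatching_dist_le (hβ : 1 ≤ β) (hK₁ : K₁ = ⋃ i, phiBlock β (P i) '' K₁)
    (hK₂ : K₂ = ⋃ j, phiBlock β (Q j) '' K₂) (hP : ∀ i, P i ≠ []) (hQ : ∀ j, Q j ≠ [])
    (hb₁ : Bornology.IsBounded K₁) (hb₂ : Bornology.IsBounded K₂)
    {x y : ℝ} (hx : x ∈ K₁) (hy : y ∈ K₂) (L : ℕ) :
    ∃ w, IsMatching P Q w ∧ ∃ s ∈ K₁ + K₂,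
      dist (x + y) (phiBlock β w s) ≤ (Metric.diam K₁ + Metric.diam K₂) / β ^ L := by
  obtain ⟨is, hisL, hxU⟩ := exists_mem_image_phiBlock_flatten hK₁ hP hx L
  obtain ⟨js, hjsL, hyV⟩ := exists_mem_image_phiBlock_flatten hK₂ hQ hy L
  obtain ⟨is₂, js₂, hlen⟩ :=
    exists_length_flatten_append_eq P Q is js (by omega) (by omega)
  obtain ⟨x', hx', -⟩ := id hxU
  obtain ⟨y', hy', -⟩ := id hyV
  have hβ₀ : 0 < β := zero_lt_one.trans_le hβ
  have his : is ≠ [] := by rintro rfl; simp at hisL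
  have hjs : js ≠ [] := by rintro rfl; simp at hjsL
  refine ⟨_, isMatching_zipWith (List.append_ne_nil_of_left_ne_nil his _)
    (List.append_ne_nil_of_left_ne_nil hjs _) hlen, x' + y', add_mem_add hx' hy', ?_⟩
  rw [phiBlock_zipWith_add hlen]
  calc dist (x + y) _ ≤ dist x _ + dist y _ := dist_add_add_le _ _ _ _
    _ ≤ Metric.diam K₁ / β ^ (is.map P).flatten.length +
        Metric.diam K₂ / β ^ (js.map Q).flatten.length :=
      add_le_add (dist_phiBlock_flatten_append_le hβ₀ hK₁ hb₁ hxU is₂ hx')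
        (dist_phiBlock_flatten_append_le hβ₀ hK₂ hb₂ hyV js₂ hy')
    _ ≤ Metric.diam K₁ / β ^ L + Metric.diam K₂ / β ^ L := by gcongr
    _ = (Metric.diam K₁ + Metric.diam K₂) / β ^ L := (add_div _ _ _).symm

end Matching

theorem add_eq_closure_iUnion_isPrimMatching {β : ℝ} {n m : ℕ} {P : Fin n → List ℝ}
    {Q : Fin m → List ℝ} {K₁ K₂ : Set ℝ} (hβ : 1 < β)
    (hK₁ : K₁ = ⋃ i, phiBlock β (P i) '' K₁) (hK₂ : K₂ = ⋃ j, phiBlock β (Q j) '' K₂)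
    (hP : ∀ i, P i ≠ []) (hQ : ∀ j, Q j ≠ []) (hc₁ : IsCompact K₁) (hc₂ : IsCompact K₂) :
    K₁ + K₂ = closure (⋃ w ∈ {w | IsPrimMatching P Q w}, phiBlock β w '' (K₁ + K₂)) := by
  refine (closure_minimal ?_ (hc₁.add hc₂).isClosed).antisymm' ?_
  · exact iUnion₂_subset fun w hw => (hw.1.mapsTo hK₁ hK₂).image_subset
  rintro _ ⟨x, hx, y, hy, rfl⟩
  rw [Metric.mem_closure_iff]
  intro ε hε
  obtain ⟨L, hL⟩ := pow_unbounded_of_one_lt ((Metric.diam K₁ + Metric.diam K₂) / ε) hβ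
  obtain ⟨w, hw, s, hs, hdist⟩ := exists_isMatching_dist_le hβ.le hK₁ hK₂ hP hQ
    hc₁.isBounded hc₂.isBounded hx hy L
  obtain ⟨w₁, rest, hw₁, hrest, rfl⟩ := hw.exists_isPrimMatching_append
  have hs' : phiBlock β rest s ∈ K₁ + K₂ := by
    rcases hrest with rfl | hrest
    · rwa [phiBlock_nil]
    · exact hrest.mapsTo hK₁ hK₂ hs
  refine ⟨_, mem_biUnion hw₁ (mem_image_of_mem _ hs'), ?_⟩
  rw [← phiBlock_append]
  refine hdist.trans_lt ((div_lt_iff₀ (pow_pos (zero_lt_one.trans hβ) L)).mpr ?_)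
  rwa [div_lt_iff₀ hε, mul_comm] at hL

theorem statement0_general (β : ℝ) (hβ : 1 < β) (n m : ℕ)
    (nv : Fin n → ℕ) (hnv : ∀ i, 0 < nv i) (a : Fin n → ℝ)
    (mv : Fin m → ℕ) (hmv : ∀ j, 0 < mv j) (b : Fin m → ℝ)
    (K₁ K₂ : Set ℝ)
    (hK₁c : IsCompact K₁)
    (hK₁ : K₁ = ⋃ i : Fin n, (fun x => x / β ^ nv i + a i) '' K₁)
    (hK₂c : IsCompact K₂)
    (hK₂ : K₂ = ⋃ j : Fin m, (fun x => x / β ^ mv j + b j) '' K₂)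
    (P : Fin n → List ℝ) (Q : Fin m → List ℝ)
    (hP : P = fun i => digitBlock β (nv i) (a i))
    (hQ : Q = fun j => digitBlock β (mv j) (b j))
    (D : Set (List ℝ)) (hD : D = {w | IsPrimMatching P Q w}) :
    (D.Finite → K₁ + K₂ = ⋃ w ∈ D, phiBlock β w '' (K₁ + K₂)) ∧
    (D.Infinite → K₁ + K₂ = closure (⋃ w ∈ D, phiBlock β w '' (K₁ + K₂))) := by
  have hβ₀ : β ≠ 0 := by positivity
  have hK₁' : K₁ = ⋃ i, phiBlock β (P i) '' K₁ := by
    simpa only [hP, phiBlock_digitBlock hβ₀ (hnv _)] using hK₁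
  have hK₂' : K₂ = ⋃ j, phiBlock β (Q j) '' K₂ := by
    simpa only [hQ, phiBlock_digitBlock hβ₀ (hmv _)] using hK₂
  have hS := add_eq_closure_iUnion_isPrimMatching hβ hK₁' hK₂'
    (fun i => by simp [hP, digitBlock]) (fun j => by simp [hQ, digitBlock]) hK₁c hK₂c
  subst hD
  refine ⟨fun hfin => hS.trans (IsClosed.closure_eq ?_), fun _ => hS⟩
  exact hfin.isClosed_biUnion fun w _ => ((hK₁c.add hK₂c).image (continuous_phiBlock w)).isClosed

/-- `K₁+K₂` is a self-similar set for the primitive Matchings if there are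
finitely many of them, and is the attractor of the infinite iterated function system of
the primitive Matchings otherwise. -/
theorem statement0 (β : ℝ) (hβ : 1 < β) (n m : ℕ) (hn : 0 < n) (hm : 0 < m)
    (nv : Fin n → ℕ) (hnv : ∀ i, 0 < nv i) (a : Fin n → ℝ)
    (mv : Fin m → ℕ) (hmv : ∀ j, 0 < mv j) (b : Fin m → ℝ)
    (K₁ K₂ : Set ℝ)
    (hK₁ne : K₁.Nonempty) (hK₁c : IsCompact K₁)
    (hK₁ : K₁ = ⋃ i : Fin n, (fun x => x / β ^ nv i + a i) '' K₁)
    (hK₂ne : K₂.Nonempty) (hK₂c : IsCompact K₂)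
    (hK₂ : K₂ = ⋃ j : Fin m, (fun x => x / β ^ mv j + b j) '' K₂)
    (P : Fin n → List ℝ) (Q : Fin m → List ℝ)
    (hP : P = fun i => digitBlock β (nv i) (a i))
    (hQ : Q = fun j => digitBlock β (mv j) (b j))
    (D : Set (List ℝ)) (hD : D = {w | IsPrimMatching P Q w}) :
    (D.Finite → K₁ + K₂ = ⋃ w ∈ D, phiBlock β w '' (K₁ + K₂)) ∧
    (D.Infinite → K₁ + K₂ = closure (⋃ w ∈ D, phiBlock β w '' (K₁ + K₂))) :=
  statement0_general β hβ n m nv hnv a mv hmv b K₁ K₂ hK₁c hK₁ hK₂c hK₂ P Q hP hQ D hD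
end

section
/- Assume the set of Matchings generated by D₁ and D₂ is infinite. Let (a_k) ∈ C and let ε > 0. Then there exists a sequence (b_k)_{k≥1} which is an infinite concatenation of Matchings such that |Σ_{k=1}^{∞} a_k β^{-k} − Σ_{k=1}^{∞} b_k β^{-k}| < ε. -/
open Finset Pointwise

/-! The first `K + 1` blocks of each of the two concatenations that make up a coding can be
padded to concatenations of equal length, by repeating them and appending copies of one fixed
block on each side. The coordinatewise sum is a Matching that agrees with the coding on its
first `K` digits, so repeating it forever gives an infinite concatenation of Matchings whose
value differs from that of the coding by `O(β^{-K})`, all digits being bounded. -/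

lemma length_flatten_map_range {α : Type*} (W : ℕ → List α) (T : ℕ) :
    ((List.range T).map W).flatten.length = ∑ s ∈ range T, (W s).length := by
  induction T with
  | zero => simp
  | succ T ih => simp [List.range_succ, Finset.sum_range_succ, ← ih]

namespace IsConcatSeq

variable {W : ℕ → List ℝ} {x : ℕ → ℝ}

lemma le_length_flatten (h : IsConcatSeq W x) (T : ℕ) :
    T ≤ ((List.range T).map W).flatten.length := by
  rw [length_flatten_map_range]
  simpa using Finset.card_nsmul_le_sum (range T) (fun s => (W s).length) 1
    fun s _ => List.length_pos_iff.2 (h.1 s)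

lemma getElem_flatten (h : IsConcatSeq W x) (T k : ℕ)
    (hk : k < ((List.range T).map W).flatten.length) :
    ((List.range T).map W).flatten[k] = x k := by
  induction T with
  | zero => simp at hk
  | succ T ih =>
    simp only [List.range_succ, List.map_append, List.flatten_append, List.map_singleton,
      List.flatten_singleton] at hk ⊢
    rw [List.getElem_append]
    split_ifs with hkT
    · exact ih hkT
    · have hi : k - ((List.range T).map W).flatten.length < (W T).length := by
        simp only [List.length_append] at hk; omega
      have := h.2 T ⟨_, hi⟩
      rw [← length_flatten_map_range, Nat.add_sub_cancel' (by omega)] at this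
      exact this.symm

lemma exists_mem (h : IsConcatSeq W x) (k : ℕ) : ∃ t, x k ∈ W t := by
  obtain ⟨T, hT⟩ : ∃ T, k < ((List.range T).map W).flatten.length :=
    ⟨k + 1, by have := h.le_length_flatten (k + 1); omega⟩
  obtain ⟨l, hl, hkl⟩ := List.mem_flatten.1 (h.getElem_flatten T k hT ▸ List.getElem_mem hT)
  obtain ⟨t, -, rfl⟩ := List.mem_map.1 hl
  exact ⟨t, hkl⟩

end IsConcatSeq

section SeqVal

variable {β : ℝ} (hβ : 1 < β)
include hβ

lemma summable_div_pow_of_abs_le {u : ℕ → ℝ} {M : ℝ} (hu : ∀ k, |u k| ≤ M) :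
    Summable fun k => u k / β ^ (k + 1) := by
  have hβ0 : 0 < β := by linarith
  refine Summable.of_norm_bounded
    ((summable_geometric_of_lt_one (by positivity) (inv_lt_one_of_one_lt₀ hβ)).mul_left
      (M * β⁻¹)) fun k => ?_
  calc ‖u k / β ^ (k + 1)‖ = |u k| / β ^ (k + 1) := by
        rw [Real.norm_eq_abs, abs_div, abs_of_pos (pow_pos hβ0 _)]
    _ ≤ M / β ^ (k + 1) := by gcongr; exact hu k
    _ = M * β⁻¹ * β⁻¹ ^ k := by rw [inv_pow]; field_simp; ring

lemma abs_seqVal_sub_le {u v : ℕ → ℝ} {M : ℝ} (hu : ∀ k, |u k| ≤ M) (hv : ∀ k, |v k| ≤ M)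
    {K : ℕ} (huv : ∀ k < K, u k = v k) :
    |seqVal β u - seqVal β v| ≤ 2 * M / (β - 1) * β⁻¹ ^ K := by
  have hβ0 : 0 < β := by linarith
  have hM : 0 ≤ M := (abs_nonneg _).trans (hu 0)
  set d : ℕ → ℝ := fun k => u k / β ^ (k + 1) - v k / β ^ (k + 1)
  have hd : Summable d :=
    (summable_div_pow_of_abs_le hβ hu).sub (summable_div_pow_of_abs_le hβ hv)
  have hgeom : HasSum (fun i : ℕ => 2 * M * β⁻¹ ^ (K + 1) * β⁻¹ ^ i)
      (2 * M * β⁻¹ ^ (K + 1) * (1 - β⁻¹)⁻¹) :=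
    (hasSum_geometric_of_lt_one (by positivity) (inv_lt_one_of_one_lt₀ hβ)).mul_left _
  have htail : ‖∑' i, d (i + K)‖ ≤ 2 * M * β⁻¹ ^ (K + 1) * (1 - β⁻¹)⁻¹ := by
    refine tsum_of_norm_bounded hgeom fun i => ?_
    have hdiff : |u (i + K) - v (i + K)| ≤ 2 * M := by
      linarith [abs_sub (u (i + K)) (v (i + K)), hu (i + K), hv (i + K)]
    calc ‖d (i + K)‖ = |u (i + K) - v (i + K)| / β ^ (i + K + 1) := by
          rw [Real.norm_eq_abs, show d (i + K) = _ from div_sub_div_same .., abs_div,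
            abs_of_pos (pow_pos hβ0 _)]
      _ ≤ 2 * M / β ^ (i + K + 1) := by gcongr
      _ = 2 * M * β⁻¹ ^ (K + 1) * β⁻¹ ^ i := by simp only [inv_pow]; field_simp; ring
  calc |seqVal β u - seqVal β v| = |∑' i, d (i + K)| := by
        rw [seqVal, seqVal, ← (summable_div_pow_of_abs_le hβ hu).tsum_sub
          (summable_div_pow_of_abs_le hβ hv), ← hd.sum_add_tsum_nat_add K,
          Finset.sum_eq_zero fun k hk => by simp [d, huv k (Finset.mem_range.1 hk)], zero_add]
    _ ≤ 2 * M * β⁻¹ ^ (K + 1) * (1 - β⁻¹)⁻¹ := htail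
    _ = 2 * M / (β - 1) * β⁻¹ ^ K := by
        have : β - 1 ≠ 0 := by linarith
        simp only [inv_pow]
        field_simp
        ring

lemma exists_abs_seqVal_sub_lt (M : ℝ) {ε : ℝ} (hε : 0 < ε) :
    ∃ K, ∀ u v : ℕ → ℝ, (∀ k, |u k| ≤ M) → (∀ k, |v k| ≤ M) → (∀ k < K, u k = v k) →
      |seqVal β u - seqVal β v| < ε := by
  have hlim : Filter.Tendsto (fun K : ℕ => 2 * M / (β - 1) * β⁻¹ ^ K) Filter.atTop (nhds 0) := by
    simpa using (tendsto_pow_atTop_nhds_zero_of_lt_one (by positivity)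
      (inv_lt_one_of_one_lt₀ hβ)).const_mul (2 * M / (β - 1))
  obtain ⟨K, hK⟩ := (hlim.eventually (gt_mem_nhds hε)).exists
  exact ⟨K, fun u v hu hv huv => (abs_seqVal_sub_le hβ hu hv huv).trans_lt hK⟩

end SeqVal

lemma exists_sum_map_append_eq {ι κ : Type*} (f : ι → ℕ) (g : κ → ℕ) (is : List ι)
    (js : List κ) {i₀ : ι} {j₀ : κ} (hi₀ : f i₀ ≠ 0) (hj₀ : g j₀ ≠ 0) :
    ∃ is₂ js₂, ((is ++ is₂).map f).sum = ((js ++ js₂).map g).sum := by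
  obtain ⟨r, hr⟩ := Nat.exists_eq_add_one_of_ne_zero (Nat.mul_ne_zero hi₀ hj₀)
  -- both sides become `(r + 1) * ((is.map f).sum + (js.map g).sum)`
  refine ⟨(List.replicate r is).flatten ++ List.replicate ((js.map g).sum * g j₀) i₀,
    (List.replicate r js).flatten ++ List.replicate ((is.map f).sum * f i₀) j₀, ?_⟩
  simp only [List.map_append, List.sum_append, List.map_flatten, List.map_replicate,
    List.sum_flatten, List.sum_replicate, smul_eq_mul, mul_assoc, mul_comm (g j₀) (f i₀), hr]
  ring

lemma IsInfConcatFrom.exists_prefix {ι : Type*} {P : ι → List ℝ} {x : ℕ → ℝ}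
    (hx : IsInfConcatFrom (Set.range P) x) (T : ℕ) :
    ∃ is : List ι, (∀ i ∈ is, P i ≠ []) ∧ T ≤ (is.map P).flatten.length ∧
      ∀ k (hk : k < (is.map P).flatten.length), (is.map P).flatten[k] = x k := by
  obtain ⟨W, hWP, hW⟩ := hx
  choose idx hidx using hWP
  have hmap : ((List.range T).map idx).map P = (List.range T).map W := by
    simp only [List.map_map]
    exact List.map_congr_left fun t _ => hidx t
  refine ⟨(List.range T).map idx, ?_, hmap ▸ hW.le_length_flatten T, ?_⟩
  · simp only [List.mem_map, List.mem_range]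
    rintro _ ⟨t, -, rfl⟩
    exact hidx t ▸ hW.1 t
  · simp only [hmap]
    exact hW.getElem_flatten T

lemma IsCoding.exists_isMatching_getD_eq {n m : ℕ} {P : Fin n → List ℝ} {Q : Fin m → List ℝ}
    {a : ℕ → ℝ} (ha : IsCoding P Q a) (K : ℕ) :
    ∃ w, IsMatching P Q w ∧ K < w.length ∧ ∀ k < K, w.getD k 0 = a k := by
  obtain ⟨x, y, hx, hy, hxy⟩ := ha
  obtain ⟨is, hisP, hisK, hisx⟩ := hx.exists_prefix (K + 1)
  obtain ⟨js, hjsQ, hjsK, hjsy⟩ := hy.exists_prefix (K + 1)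
  obtain ⟨i₀, hi₀⟩ := List.exists_mem_of_ne_nil is (by rintro rfl; simp at hisK)
  obtain ⟨j₀, hj₀⟩ := List.exists_mem_of_ne_nil js (by rintro rfl; simp at hjsK)
  obtain ⟨is₂, js₂, hsum⟩ := exists_sum_map_append_eq (fun i => (P i).length)
    (fun j => (Q j).length) is js (mt List.length_eq_zero_iff.1 (hisP i₀ hi₀))
    (mt List.length_eq_zero_iff.1 (hjsQ j₀ hj₀))
  set u := ((is ++ is₂).map P).flatten with hu
  set v := ((js ++ js₂).map Q).flatten with hv
  have huv : u.length = v.length := by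
    simpa [hu, hv, List.length_flatten, Function.comp_def] using hsum
  simp only [List.map_append, List.flatten_append] at hu hv
  have hlen : (List.zipWith (· + ·) u v).length = u.length := by
    rw [List.length_zipWith, huv, min_self]
  refine ⟨List.zipWith (· + ·) u v, ⟨is ++ is₂, js ++ js₂,
    List.append_ne_nil_of_left_ne_nil (List.ne_nil_of_mem hi₀) _,
    List.append_ne_nil_of_left_ne_nil (List.ne_nil_of_mem hj₀) _, hlen.symm, (hlen.trans huv).symm,
    rfl⟩, ?_, fun k hk => ?_⟩
  · rw [hlen, hu, List.length_append]
    omega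
  · have hku : k < (is.map P).flatten.length := by omega
    have hkv : k < (js.map Q).flatten.length := by omega
    rw [List.getD_eq_getElem _ _ (by rw [hlen, hu, List.length_append]; omega),
      List.getElem_zipWith]
    simp only [hu, hv, List.getElem_append_left hku, List.getElem_append_left hkv, hisx, hjsy, hxy]

lemma isConcatSeq_const {w : List ℝ} (hw : w ≠ []) :
    IsConcatSeq (fun _ => w) (fun k => w.getD (k % w.length) 0) := by
  refine ⟨fun _ => hw, fun t i => ?_⟩
  simp only [Finset.sum_const, Finset.card_range, smul_eq_mul, Nat.mul_add_mod_self_right,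
    Nat.mod_eq_of_lt i.2, List.getD_eq_getElem _ _ i.2, List.get_eq_getElem]

lemma exists_abs_le_of_mem {ι : Type*} [Finite ι] (P : ι → List ℝ) :
    ∃ M, ∀ i, ∀ e ∈ P i, |e| ≤ M := by
  obtain ⟨M, hM⟩ := ((Set.finite_iUnion fun i => (P i).finite_toSet).image abs).bddAbove
  exact ⟨M, fun i e he => hM ⟨e, Set.mem_iUnion.2 ⟨i, he⟩, rfl⟩⟩

section Bounds

variable {n m : ℕ} {P : Fin n → List ℝ} {Q : Fin m → List ℝ} {MP MQ : ℝ}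
  (hP : ∀ i, ∀ e ∈ P i, |e| ≤ MP) (hQ : ∀ j, ∀ e ∈ Q j, |e| ≤ MQ)
include hP hQ

lemma IsMatching.abs_le {w : List ℝ} (hw : IsMatching P Q w) : ∀ e ∈ w, |e| ≤ MP + MQ := by
  obtain ⟨is, js, -, -, -, -, rfl⟩ := hw
  intro e he
  obtain ⟨k, hk, rfl⟩ := List.mem_iff_getElem.1 he
  rw [List.getElem_zipWith]
  refine (abs_add_le _ _).trans (add_le_add ?_ ?_)
  · obtain ⟨l, hl, hel⟩ := List.mem_flatten.1 (List.getElem_mem (l := (is.map P).flatten) _)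
    obtain ⟨i, -, rfl⟩ := List.mem_map.1 hl
    exact hP i _ hel
  · obtain ⟨l, hl, hel⟩ := List.mem_flatten.1 (List.getElem_mem (l := (js.map Q).flatten) _)
    obtain ⟨j, -, rfl⟩ := List.mem_map.1 hl
    exact hQ j _ hel

lemma IsCoding.abs_le {a : ℕ → ℝ} (ha : IsCoding P Q a) (k : ℕ) : |a k| ≤ MP + MQ := by
  obtain ⟨x, y, ⟨W, hWP, hW⟩, ⟨V, hVQ, hV⟩, hxy⟩ := ha
  obtain ⟨t, hxt⟩ := hW.exists_mem k
  obtain ⟨s, hys⟩ := hV.exists_mem k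
  obtain ⟨i, hi⟩ := hWP t
  obtain ⟨j, hj⟩ := hVQ s
  rw [hxy]
  exact (abs_add_le _ _).trans (add_le_add (hP i _ (hi ▸ hxt)) (hQ j _ (hj ▸ hys)))

end Bounds

theorem statement2_general (β : ℝ) (hβ : 1 < β) (n m : ℕ)
    (P : Fin n → List ℝ) (Q : Fin m → List ℝ)
    (aseq : ℕ → ℝ) (ha : aseq ∈ Cset P Q)
    (ε : ℝ) (hε : 0 < ε) :
    ∃ bseq : ℕ → ℝ, IsInfConcatFrom {w : List ℝ | IsMatching P Q w} bseq ∧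
      |seqVal β aseq - seqVal β bseq| < ε := by
  obtain ⟨MP, hMP⟩ := exists_abs_le_of_mem P
  obtain ⟨MQ, hMQ⟩ := exists_abs_le_of_mem Q
  obtain ⟨K, hK⟩ := exists_abs_seqVal_sub_lt hβ (MP + MQ) hε
  obtain ⟨w, hw, hKw, hwa⟩ := ha.1.exists_isMatching_getD_eq K
  have hw₀ : w ≠ [] := List.ne_nil_of_length_pos (by omega)
  refine ⟨_, ⟨_, fun _ => hw, isConcatSeq_const hw₀⟩,
    hK _ _ (ha.1.abs_le hMP hMQ) (fun k => ?_) fun k hk => ?_⟩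
  · rw [List.getD_eq_getElem _ _ (Nat.mod_lt _ (List.length_pos_iff.2 hw₀))]
    exact hw.abs_le hMP hMQ _ (List.getElem_mem _)
  · rw [Nat.mod_eq_of_lt (by omega), hwa k hk]

/-- if there are infinitely many Matchings, any coding in `C` can be
approximated in value, to within any `ε > 0`, by an infinite concatenation of Matchings. -/
theorem statement2 (β : ℝ) (hβ : 1 < β) (n m : ℕ) (hn : 0 < n) (hm : 0 < m)
    (nv : Fin n → ℕ) (hnv : ∀ i, 0 < nv i) (a : Fin n → ℝ)
    (mv : Fin m → ℕ) (hmv : ∀ j, 0 < mv j) (b : Fin m → ℝ)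
    (P : Fin n → List ℝ) (Q : Fin m → List ℝ)
    (hP : P = fun i => digitBlock β (nv i) (a i))
    (hQ : Q = fun j => digitBlock β (mv j) (b j))
    (hinf : {w : List ℝ | IsMatching P Q w}.Infinite)
    (aseq : ℕ → ℝ) (ha : aseq ∈ Cset P Q)
    (ε : ℝ) (hε : 0 < ε) :
    ∃ bseq : ℕ → ℝ, IsInfConcatFrom {w : List ℝ | IsMatching P Q w} bseq ∧
      |seqVal β aseq - seqVal β bseq| < ε :=
  statement2_general β hβ n m P Q aseq ha ε hε
end

section
/- In the setting below, the set difference (K₁+K₂) \ E is countable; that is, E equals K₁+K₂ up to a countable set. -/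
/-!
A point of an attractor is the value `codeVal` of a coding `σ` by the maps of its IFS, so a point
of `K₁ + K₂` is a sum of two coding values; their digit sequences are concatenations of blocks of
lengths `k` and `2k`. If short blocks occur infinitely often in one of the two codings, the two
sets of block boundaries (multiples of `k`, the second one never skipping two consecutive
multiples) meet infinitely often, and cutting the sum of the digit sequences at the common
boundaries writes it as an infinite concatenation of Matchings. Otherwise both codings are
eventually constant, and there are only countably many such pairs.
-/

open Finset Pointwise

open Filter

def blockStart (W : ℕ → List ℝ) (t : ℕ) : ℕ := ∑ s ∈ range t, (W s).length

section Concatenation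

variable {W : ℕ → List ℝ} {x : ℕ → ℝ}

lemma blockStart_succ (W : ℕ → List ℝ) (t : ℕ) :
    blockStart W (t + 1) = blockStart W t + (W t).length :=
  sum_range_succ _ _

lemma blockStart_strictMono (hW : ∀ t, W t ≠ []) : StrictMono (blockStart W) :=
  strictMono_nat_of_lt_succ fun t => by
    have := List.length_pos_iff.2 (hW t)
    rw [blockStart_succ]
    omega

lemma exists_blockStart_le_lt (hW : ∀ t, W t ≠ []) (m : ℕ) :
    ∃ t, blockStart W t ≤ m ∧ m < blockStart W (t + 1) := by
  have hlt := blockStart_strictMono hW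
  induction m with
  | zero => exact ⟨0, le_rfl, hlt zero_lt_one⟩
  | succ m ih =>
    obtain ⟨t, h₁, h₂⟩ := ih
    by_cases h : m + 1 < blockStart W (t + 1)
    · exact ⟨t, by omega, h⟩
    · exact ⟨t + 1, by omega, by have := hlt (lt_add_one (t + 1)); omega⟩

lemma exists_isConcatSeq (hW : ∀ t, W t ≠ []) : ∃ x, IsConcatSeq W x := by
  choose blk hle hlt using exists_blockStart_le_lt hW
  have hmono := (blockStart_strictMono hW).monotone
  have hblk : ∀ t i, i < (W t).length → blk (blockStart W t + i) = t := by
    intro t i hi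
    have := hle (blockStart W t + i)
    have := hlt (blockStart W t + i)
    have := blockStart_succ W t
    by_contra hne
    rcases Nat.lt_or_gt_of_ne hne with h | h
    · have := hmono (show blk (blockStart W t + i) + 1 ≤ t by omega); omega
    · have := hmono (show t + 1 ≤ blk (blockStart W t + i) by omega); omega
  refine ⟨fun m => (W (blk m)).getD (m - blockStart W (blk m)) 0, hW, fun t i => ?_⟩
  change (W (blk (blockStart W t + i))).getD
    (blockStart W t + i - blockStart W (blk (blockStart W t + i))) 0 = _
  rw [hblk t i i.2, Nat.add_sub_cancel_left, List.getD_eq_getElem _ _ i.2]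
  rfl

namespace IsConcatSeq

lemma apply_blockStart_add (hx : IsConcatSeq W x) (t : ℕ) {i : ℕ} (hi : i < (W t).length) :
    x (blockStart W t + i) = (W t)[i] :=
  hx.2 t ⟨i, hi⟩

lemma eq_map_range' (hx : IsConcatSeq W x) (t : ℕ) :
    W t = (List.range' (blockStart W t) (W t).length).map x :=
  List.ext_getElem (by simp) fun i hi _ => by simp [hx.apply_blockStart_add t hi]

lemma flatten_map_range' (hx : IsConcatSeq W x) (t d : ℕ) :
    ((List.range' t d).map W).flatten =
      (List.range' (blockStart W t) (blockStart W (t + d) - blockStart W t)).map x := by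
  induction d generalizing t with
  | zero => simp
  | succ d ih =>
    have hmono := (blockStart_strictMono hx.1).monotone
    have h₁ := hmono (show t + 1 ≤ t + 1 + d by omega)
    rw [show t + (d + 1) = t + 1 + d by omega, List.range'_succ, List.map_cons, List.flatten_cons,
      ih, hx.eq_map_range' t, ← List.map_append, blockStart_succ, List.range'_append_1]
    rw [blockStart_succ] at h₁
    congr 2
    omega

end IsConcatSeq

lemma isConcatSeq_segments {c : ℕ → ℕ} (hc : StrictMono c) (hc0 : c 0 = 0) (z : ℕ → ℝ) :
    IsConcatSeq (fun r => (List.range' (c r) (c (r + 1) - c r)).map z) z := by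
  have hne : ∀ r, (List.range' (c r) (c (r + 1) - c r)).map z ≠ [] := fun r => by
    have := hc (lt_add_one r)
    simp only [ne_eq, List.map_eq_nil_iff, List.range'_eq_nil_iff]
    omega
  have hstart : ∀ r, blockStart (fun r => (List.range' (c r) (c (r + 1) - c r)).map z) r = c r := by
    intro r
    induction r with
    | zero => exact hc0.symm
    | succ r ih =>
      have := hc (lt_add_one r)
      rw [blockStart_succ, ih, List.length_map, List.length_range']
      omega
  refine ⟨hne, fun r i => ?_⟩
  change z (blockStart _ r + i) = _
  simp [hstart]

end Concatenation

section DigitBlocks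

variable {β : ℝ} {L : ℕ} {A : ℝ}

lemma digitBlock_ne_nil (β : ℝ) (L : ℕ) (A : ℝ) : digitBlock β L A ≠ [] := by
  simp [digitBlock]

lemma length_digitBlock_s11 (hL : 1 ≤ L) : (digitBlock β L A).length = L := by
  simp [digitBlock]
  omega

lemma getElem_digitBlock (hL : 1 ≤ L) {i : ℕ} (hi : i < (digitBlock β L A).length) :
    (digitBlock β L A)[i] = if i = L - 1 then β ^ L * A else 0 := by
  rw [length_digitBlock_s11 hL] at hi
  simp only [digitBlock, List.getElem_append, List.length_replicate, List.getElem_replicate,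
    List.getElem_singleton]
  split_ifs <;> first | rfl | omega

end DigitBlocks

lemma self_le_sum_range {L : ℕ → ℕ} (hL : ∀ t, 1 ≤ L t) (t : ℕ) : t ≤ ∑ s ∈ range t, L s := by
  simpa using card_nsmul_le_sum (range t) L 1 fun s _ => hL s

lemma summable_div_pow_sum_range {β : ℝ} (hβ : 1 < β) {L : ℕ → ℕ} (hL : ∀ t, 1 ≤ L t)
    {A : ℕ → ℝ} {C : ℝ} (hA : ∀ t, |A t| ≤ C) :
    Summable fun t => A t / β ^ ∑ s ∈ range t, L s := by
  have hβ₀ : 0 < β := zero_lt_one.trans hβ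
  refine Summable.of_norm_bounded ((summable_geometric_of_lt_one (inv_nonneg.2 hβ₀.le)
    (inv_lt_one_of_one_lt₀ hβ)).mul_left C) fun t => ?_
  have hC : 0 ≤ C := (abs_nonneg _).trans (hA t)
  rw [Real.norm_eq_abs, abs_div, abs_of_pos (pow_pos hβ₀ _), inv_pow, ← div_eq_mul_inv]
  exact div_le_div₀ hC (hA t) (pow_pos hβ₀ t) (pow_le_pow_right₀ hβ.le (self_le_sum_range hL t))

theorem hasSum_of_isConcatSeq_digitBlock {β : ℝ} (hβ : β ≠ 0) {L : ℕ → ℕ} (hL : ∀ t, 1 ≤ L t)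
    {A : ℕ → ℝ} (hA : Summable fun t => A t / β ^ ∑ s ∈ range t, L s) {x : ℕ → ℝ}
    (hx : IsConcatSeq (fun t => digitBlock β (L t) (A t)) x) :
    HasSum (fun m => x m / β ^ (m + 1)) (∑' t, A t / β ^ ∑ s ∈ range t, L s) := by
  set W : ℕ → List ℝ := fun t => digitBlock β (L t) (A t)
  have hlen (t : ℕ) : (W t).length = L t := length_digitBlock_s11 (hL t)
  have hstart (t : ℕ) : blockStart W t = ∑ s ∈ range t, L s := sum_congr rfl fun s _ => hlen s
  have hdigit (t i : ℕ) (hi : i < L t) :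
      x (blockStart W t + i) = if i = L t - 1 then β ^ L t * A t else 0 := by
    rw [hx.apply_blockStart_add t (by rwa [hlen])]
    exact getElem_digitBlock (hL t) _
  -- only the last letter of each block is nonzero
  let g : ℕ → ℕ := fun t => blockStart W t + (L t - 1)
  have hg : StrictMono g := strictMono_nat_of_lt_succ fun t => by
    have := hL t
    have := hL (t + 1)
    have := blockStart_succ W t
    simp only [g, hlen] at *
    omega
  have hsupp : ∀ m ∉ Set.range g, x m / β ^ (m + 1) = 0 := by
    intro m hm
    obtain ⟨t, h₁, h₂⟩ := exists_blockStart_le_lt hx.1 m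
    rw [blockStart_succ, hlen] at h₂
    have hi : m - blockStart W t ≠ L t - 1 := fun h => hm ⟨t, by simp only [g]; omega⟩
    rw [← Nat.add_sub_cancel' h₁, hdigit t _ (by omega), if_neg hi, zero_div]
  rw [← hg.injective.hasSum_iff hsupp]
  convert hA.hasSum using 2 with t
  have := hL t
  have hlast := hdigit t (L t - 1) (by omega)
  rw [if_pos rfl] at hlast
  change x (blockStart W t + (L t - 1)) / β ^ (blockStart W t + (L t - 1) + 1) = _
  rw [hlast, show blockStart W t + (L t - 1) + 1 = blockStart W t + L t by omega, pow_add, hstart]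
  field_simp

noncomputable def codeVal {ι : Type*} (β : ℝ) (L : ι → ℕ) (a : ι → ℝ) (σ : ℕ → ι) : ℝ :=
  ∑' t, a (σ t) / β ^ ∑ s ∈ range t, L (σ s)

section Coding

variable {ι : Type*} [Finite ι] {β : ℝ} {L : ι → ℕ}

lemma summable_codeVal (hβ : 1 < β) (hL : ∀ i, 1 ≤ L i) (a : ι → ℝ) (σ : ℕ → ι) :
    Summable fun t => a (σ t) / β ^ ∑ s ∈ range t, L (σ s) := by
  obtain ⟨C, hC⟩ := (Set.finite_range fun i => |a i|).bddAbove
  exact summable_div_pow_sum_range hβ (fun t => hL (σ t)) fun t => hC ⟨σ t, rfl⟩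

theorem exists_codeVal_eq_of_mem (hβ : 1 < β) (hL : ∀ i, 1 ≤ L i) {a : ι → ℝ} {K : Set ℝ}
    (hKb : Bornology.IsBounded K) (hK : K ⊆ ⋃ i, (fun x => x / β ^ L i + a i) '' K) {z : ℝ}
    (hz : z ∈ K) : ∃ σ, codeVal β L a σ = z := by
  have hβ₀ : 0 < β := zero_lt_one.trans hβ
  have step (w : K) : ∃ q : ι × K, (q.2 : ℝ) / β ^ L q.1 + a q.1 = w := by
    obtain ⟨i, w', hw', hw⟩ := Set.mem_iUnion.1 (hK w.2)
    exact ⟨(i, ⟨w', hw'⟩), hw⟩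
  choose F hF using step
  let p : ℕ → K := fun t => (fun w => (F w).2)^[t] ⟨z, hz⟩
  have hp (t : ℕ) : p (t + 1) = (F (p t)).2 := Function.iterate_succ_apply' _ _ _
  let σ : ℕ → ι := fun t => (F (p t)).1
  let S : ℕ → ℕ := fun t => ∑ s ∈ range t, L (σ s)
  refine ⟨σ, ((summable_codeVal hβ hL a σ).hasSum_iff_tendsto_nat.2 ?_).tsum_eq⟩
  have hpartial (T : ℕ) :
      ∑ t ∈ range T, a (σ t) / β ^ S t = z - (p T : ℝ) / β ^ S T := by
    induction T with
    | zero => simp [S, p]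
    | succ T ih =>
      rw [sum_range_succ, ih, ← hF (p T), ← hp]
      simp only [S, sum_range_succ, pow_add]
      field_simp
      ring
  obtain ⟨C, hC⟩ := hKb.exists_norm_le
  have hgeom : Tendsto (fun T : ℕ => C * β⁻¹ ^ T) atTop (nhds 0) := by
    simpa using (tendsto_pow_atTop_nhds_zero_of_lt_one (inv_nonneg.2 hβ₀.le)
      (inv_lt_one_of_one_lt₀ hβ)).const_mul C
  have hrem : Tendsto (fun T => (p T : ℝ) / β ^ S T) atTop (nhds 0) := by
    refine squeeze_zero_norm (fun T => ?_) hgeom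
    rw [norm_div, norm_pow, Real.norm_eq_abs β, abs_of_pos hβ₀, inv_pow, ← div_eq_mul_inv]
    exact div_le_div₀ ((norm_nonneg _).trans (hC z hz)) (hC _ (p T).2) (pow_pos hβ₀ T)
      (pow_le_pow_right₀ hβ.le (self_le_sum_range (fun t => hL (σ t)) T))
  refine Tendsto.congr (fun T => (hpartial T).symm) ?_
  simpa using tendsto_const_nhds.sub hrem

end Coding

section CommonCuts

variable {k : ℕ}

lemma mul_mem_range_or_mul_succ_mem_range {L : ℕ → ℕ} (hL : ∀ t, L t = k ∨ L t = 2 * k)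
    (j : ℕ) :
    k * j ∈ Set.range (fun t => ∑ s ∈ range t, L s) ∨
      k * (j + 1) ∈ Set.range (fun t => ∑ s ∈ range t, L s) := by
  induction j with
  | zero => exact Or.inl ⟨0, by simp⟩
  | succ j ih =>
    rcases ih with ⟨u, hu⟩ | h
    · rcases hL u with h | h
      · exact Or.inl ⟨u + 1, by simp only [sum_range_succ] at hu ⊢; rw [hu, h]; ring⟩
      · exact Or.inr ⟨u + 1, by simp only [sum_range_succ] at hu ⊢; rw [hu, h]; ring⟩
    · exact Or.inl h

theorem infinite_range_inter_range (hk : 0 < k) {L M : ℕ → ℕ}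
    (hL : ∀ t, L t = k ∨ L t = 2 * k) (hM : ∀ t, M t = k ∨ M t = 2 * k)
    (hfreq : ∃ᶠ t in atTop, L t = k) :
    (Set.range (fun t => ∑ s ∈ range t, L s) ∩
      Set.range (fun t => ∑ s ∈ range t, M s)).Infinite := by
  refine Set.infinite_of_forall_exists_gt fun c => ?_
  obtain ⟨t, htk, hct⟩ := (hfreq.and_eventually (eventually_gt_atTop c)).exists
  obtain ⟨j, hj⟩ : k ∣ ∑ s ∈ range t, L s :=
    dvd_sum fun s _ => by rcases hL s with h | h <;> simp [h]
  have hj' : ∑ s ∈ range (t + 1), L s = k * (j + 1) := by rw [sum_range_succ, hj, htk]; ring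
  have hcj : c < k * j :=
    hj ▸ hct.trans_le (self_le_sum_range (fun s => by rcases hL s with h | h <;> omega) t)
  rcases mul_mem_range_or_mul_succ_mem_range hM j with h | h
  · exact ⟨k * j, ⟨⟨t, hj⟩, h⟩, hcj⟩
  · exact ⟨k * (j + 1), ⟨⟨t + 1, hj'⟩, h⟩, hcj.trans_le (by rw [mul_add_one]; omega)⟩

end CommonCuts

section Matchings

variable {n m : ℕ} {P : Fin n → List ℝ} {Q : Fin m → List ℝ} {σ : ℕ → Fin n} {τ : ℕ → Fin m}
  {x y : ℕ → ℝ}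

lemma isMatching_of_blockStart_eq (hx : IsConcatSeq (P ∘ σ) x) (hy : IsConcatSeq (Q ∘ τ) y)
    {t t' u u' : ℕ} (ht : t < t') (hu : u < u')
    (h : blockStart (P ∘ σ) t = blockStart (Q ∘ τ) u)
    (h' : blockStart (P ∘ σ) t' = blockStart (Q ∘ τ) u') :
    IsMatching P Q ((List.range' (blockStart (P ∘ σ) t)
      (blockStart (P ∘ σ) t' - blockStart (P ∘ σ) t)).map (x + y)) := by
  have hX : (((List.range' t (t' - t)).map σ).map P).flatten =
      (List.range' (blockStart (P ∘ σ) t)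
        (blockStart (P ∘ σ) t' - blockStart (P ∘ σ) t)).map x := by
    rw [List.map_map, hx.flatten_map_range', Nat.add_sub_cancel' ht.le]
  have hY : (((List.range' u (u' - u)).map τ).map Q).flatten =
      (List.range' (blockStart (P ∘ σ) t)
        (blockStart (P ∘ σ) t' - blockStart (P ∘ σ) t)).map y := by
    rw [List.map_map, hy.flatten_map_range', Nat.add_sub_cancel' hu.le, h, h']
  refine ⟨(List.range' t (t' - t)).map σ, (List.range' u (u' - u)).map τ,
    by simp; omega, by simp; omega, by rw [hX]; simp, by rw [hY]; simp, ?_⟩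
  rw [hX, hY, List.zipWith_map, List.zipWith_self]
  rfl

theorem isInfConcatFrom_isMatching_add (hx : IsConcatSeq (P ∘ σ) x) (hy : IsConcatSeq (Q ∘ τ) y)
    (hcut : (Set.range (blockStart (P ∘ σ)) ∩ Set.range (blockStart (Q ∘ τ))).Infinite) :
    IsInfConcatFrom {w | IsMatching P Q w} (x + y) := by
  set C := Set.range (blockStart (P ∘ σ)) ∩ Set.range (blockStart (Q ∘ τ))
  -- cut `x + y` at the common block boundaries, enumerated increasingly
  let c : ℕ → ℕ := Nat.nth (· ∈ C)
  have hc : StrictMono c := Nat.nth_strictMono hcut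
  have hc0 : c 0 = 0 := Nat.nth_zero_of_zero ⟨⟨0, rfl⟩, ⟨0, rfl⟩⟩
  refine ⟨_, fun r => ?_, isConcatSeq_segments hc hc0 (x + y)⟩
  obtain ⟨⟨t, ht⟩, u, hu⟩ : c r ∈ C := Nat.nth_mem_of_infinite hcut r
  obtain ⟨⟨t', ht'⟩, u', hu'⟩ : c (r + 1) ∈ C := Nat.nth_mem_of_infinite hcut (r + 1)
  have hlt : c r < c (r + 1) := hc (lt_add_one r)
  change IsMatching P Q ((List.range' (c r) (c (r + 1) - c r)).map (x + y))
  rw [← ht, ← ht'] at hlt ⊢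
  exact isMatching_of_blockStart_eq hx hy ((blockStart_strictMono hx.1).lt_iff_lt.1 hlt)
    ((blockStart_strictMono hy.1).lt_iff_lt.1 (by rw [hu, hu']; exact hc (lt_add_one r)))
    (ht.trans hu.symm) (ht'.trans hu'.symm)

end Matchings

lemma blockStart_digitBlock {β : ℝ} {L : ℕ → ℕ} (hL : ∀ t, 1 ≤ L t) (A : ℕ → ℝ) :
    blockStart (fun t => digitBlock β (L t) (A t)) = fun t => ∑ s ∈ range t, L s :=
  funext fun _ => sum_congr rfl fun s _ => length_digitBlock_s11 (hL s)

theorem codeVal_add_codeVal_mem_Eset {β : ℝ} (hβ : 1 < β) {n m : ℕ} {L : Fin n → ℕ}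
    {M : Fin m → ℕ} (hL : ∀ i, 1 ≤ L i) (hM : ∀ j, 1 ≤ M j) {a : Fin n → ℝ} {b : Fin m → ℝ}
    {σ : ℕ → Fin n} {τ : ℕ → Fin m}
    (hcut : (Set.range (fun t => ∑ s ∈ range t, L (σ s)) ∩
      Set.range (fun t => ∑ s ∈ range t, M (τ s))).Infinite) :
    codeVal β L a σ + codeVal β M b τ ∈
      Eset β (fun i => digitBlock β (L i) (a i)) (fun j => digitBlock β (M j) (b j)) := by
  have hβ₀ : β ≠ 0 := (zero_lt_one.trans hβ).ne'
  obtain ⟨x, hx⟩ := exists_isConcatSeq fun t => digitBlock_ne_nil β (L (σ t)) (a (σ t))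
  obtain ⟨y, hy⟩ := exists_isConcatSeq fun t => digitBlock_ne_nil β (M (τ t)) (b (τ t))
  have hX := hasSum_of_isConcatSeq_digitBlock hβ₀ (fun t => hL (σ t))
    (summable_codeVal hβ hL a σ) hx
  have hY := hasSum_of_isConcatSeq_digitBlock hβ₀ (fun t => hM (τ t))
    (summable_codeVal hβ hM b τ) hy
  refine ⟨x + y, isInfConcatFrom_isMatching_add hx hy ?_, ?_⟩
  · rwa [Function.comp_def, Function.comp_def, blockStart_digitBlock (fun t => hL (σ t)),
      blockStart_digitBlock (fun t => hM (τ t))]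
  · simp only [seqVal, Pi.add_apply, add_div]
    exact (hX.add hY).tsum_eq.symm

theorem countable_setOf_eventuallyConst {α : Type*} [Countable α] :
    {σ : ℕ → α | EventuallyConst σ atTop}.Countable := by
  -- an eventually constant sequence is determined by its values up to the point where it
  -- becomes constant
  refine (Set.countable_iUnion fun N : ℕ => Set.countable_range
    fun f : Fin (N + 1) → α => fun t => f ⟨min t N, by omega⟩).mono fun σ hσ => ?_
  obtain ⟨N, hN⟩ := eventuallyConst_atTop.1 hσ
  refine Set.mem_iUnion.2 ⟨N, fun i => σ i, funext fun t => ?_⟩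
  rcases le_total t N with h | h
  · simp [min_eq_left h]
  · simp [min_eq_right h, hN t h]

lemma frequently_eq_of_not_eventuallyConst {n k : ℕ} {L : Fin n → ℕ}
    (hL : ∀ i : Fin n, L i = if (i : ℕ) = n - 1 then 2 * k else k) {σ : ℕ → Fin n}
    (hσ : ¬ EventuallyConst σ atTop) : ∃ᶠ t in atTop, L (σ t) = k := by
  contrapose! hσ
  obtain ⟨N, hN⟩ := eventually_atTop.1 hσ
  have hlast : ∀ t ≥ N, (σ t : ℕ) = n - 1 := fun t ht => by
    by_contra h
    exact hN t ht (by rw [hL, if_neg h])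
  exact eventuallyConst_atTop.2 ⟨N, fun t ht => Fin.ext ((hlast t ht).trans (hlast N le_rfl).symm)⟩

theorem statement11_general (β : ℝ) (hβ : 1 < β) (k : ℕ) (hk : 0 < k) (n : ℕ)
    (a : Fin n → ℝ)
    (b : Fin n → ℝ)
    (nv : Fin n → ℕ) (mv : Fin n → ℕ)
    (hnv : ∀ i : Fin n, nv i = if (i : ℕ) = n - 1 then 2 * k else k)
    (hmv : ∀ j : Fin n, mv j = if (j : ℕ) = n - 1 then 2 * k else k)
    (K₁ K₂ : Set ℝ)
    (hK₁c : IsCompact K₁)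
    (hK₁ : K₁ = ⋃ i : Fin n, (fun x => x / β ^ nv i + a i) '' K₁)
    (hK₂c : IsCompact K₂)
    (hK₂ : K₂ = ⋃ j : Fin n, (fun x => x / β ^ mv j + b j) '' K₂)
    (P : Fin n → List ℝ) (Q : Fin n → List ℝ)
    (hP : P = fun i => digitBlock β (nv i) (a i))
    (hQ : Q = fun j => digitBlock β (mv j) (b j)) :
    ((K₁ + K₂) \ Eset β P Q).Countable := by
  subst hP hQ
  have hnv' (i : Fin n) : nv i = k ∨ nv i = 2 * k := by rw [hnv]; split_ifs <;> simp
  have hmv' (j : Fin n) : mv j = k ∨ mv j = 2 * k := by rw [hmv]; split_ifs <;> simp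
  have hnv1 (i : Fin n) : 1 ≤ nv i := by rcases hnv' i with h | h <;> omega
  have hmv1 (j : Fin n) : 1 ≤ mv j := by rcases hmv' j with h | h <;> omega
  refine ((countable_setOf_eventuallyConst.prod countable_setOf_eventuallyConst).image
    fun p : (ℕ → Fin n) × (ℕ → Fin n) => codeVal β nv a p.1 + codeVal β mv b p.2).mono ?_
  rintro _ ⟨⟨_, hz₁, _, hz₂, rfl⟩, hE⟩
  obtain ⟨σ, rfl⟩ := exists_codeVal_eq_of_mem hβ hnv1 hK₁c.isBounded hK₁.subset hz₁
  obtain ⟨τ, rfl⟩ := exists_codeVal_eq_of_mem hβ hmv1 hK₂c.isBounded hK₂.subset hz₂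
  refine ⟨(σ, τ), ⟨?_, ?_⟩, rfl⟩ <;> by_contra hconst <;>
    refine hE (codeVal_add_codeVal_mem_Eset hβ hnv1 hmv1 ?_)
  · exact infinite_range_inter_range hk (fun t => hnv' (σ t)) (fun t => hmv' (τ t))
      (frequently_eq_of_not_eventuallyConst hnv hconst)
  · rw [Set.inter_comm]
    exact infinite_range_inter_range hk (fun t => hmv' (τ t)) (fun t => hnv' (σ t))
      (frequently_eq_of_not_eventuallyConst hmv hconst)

/-- in the setting where both IFS's consist of `n-1` maps of ratio `β^{-k}`
and one map of ratio `β^{-2k}` with nonnegative translations, the set `E` equals `K₁+K₂`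
up to a countable set. -/
theorem statement11 (β : ℝ) (hβ : 1 < β) (k : ℕ) (hk : 0 < k) (n : ℕ) (hn : 2 ≤ n)
    (a : Fin n → ℝ) (ha : ∀ i, 0 ≤ a i)
    (b : Fin n → ℝ) (hb : ∀ j, 0 ≤ b j)
    (nv : Fin n → ℕ) (mv : Fin n → ℕ)
    (hnv : ∀ i : Fin n, nv i = if (i : ℕ) = n - 1 then 2 * k else k)
    (hmv : ∀ j : Fin n, mv j = if (j : ℕ) = n - 1 then 2 * k else k)
    (K₁ K₂ : Set ℝ)
    (hK₁ne : K₁.Nonempty) (hK₁c : IsCompact K₁)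
    (hK₁ : K₁ = ⋃ i : Fin n, (fun x => x / β ^ nv i + a i) '' K₁)
    (hK₂ne : K₂.Nonempty) (hK₂c : IsCompact K₂)
    (hK₂ : K₂ = ⋃ j : Fin n, (fun x => x / β ^ mv j + b j) '' K₂)
    (P : Fin n → List ℝ) (Q : Fin n → List ℝ)
    (hP : P = fun i => digitBlock β (nv i) (a i))
    (hQ : Q = fun j => digitBlock β (mv j) (b j)) :
    ((K₁ + K₂) \ Eset β P Q).Countable :=
  statement11_general β hβ k hk n a b nv mv hnv hmv K₁ K₂ hK₁c hK₁ hK₂c hK₂ P Q hP hQ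
end
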